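/- There is an absolute constant A > 0 such that for all real x and all real y ≥ 0 with (x, y) ≠ (0, 0), one has | ( sin(x + iy)/(x + iy) )² − ( sin x / x )² | ≤ A·y·e^{2y}/(1 + x² + y²), where sin(z)/z is interpreted as 1 at z = 0. -/

import Mathlib

/-!
`fejerC` is entire, with `‖sin z‖, ‖cos z‖ ≤ e^{|Im z|}`, so its derivative
`2 (sin z / z) (z cos z - sin z) / z²` is `O(e^{2|Im z|} / (1 + |z|²))`: for `|z| ≥ 1` by the
explicit formula, on the unit disc by compactness. Since `t ↦ e^{2t} / (1 + x² + t²)` is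
increasing, the mean value inequality along the vertical segment from `x` to `x + iy` gives
the bound.
-/

/-- The complex Fejér factor `(sin z / z)²`, interpreted as `1` at `z = 0`. -/
noncomputable def fejerC (z : ℂ) : ℂ := by
  classical
  exact if z = 0 then 1 else (Complex.sin z / z) ^ 2

open Complex

lemma norm_exp_mul_I_le_exp_abs_im (z : ℂ) : ‖exp (z * I)‖ ≤ Real.exp |z.im| := by
  rw [norm_exp]
  exact Real.exp_le_exp.2 (by simpa using neg_le_abs z.im)

lemma norm_sin_le_exp_abs_im (z : ℂ) : ‖sin z‖ ≤ Real.exp |z.im| := by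
  have h₁ := norm_exp_mul_I_le_exp_abs_im z
  have h₂ := norm_exp_mul_I_le_exp_abs_im (-z)
  rw [neg_im, abs_neg] at h₂
  calc ‖sin z‖ ≤ (‖exp (-z * I)‖ + ‖exp (z * I)‖) / 2 := by
        rw [sin, norm_div, norm_mul, norm_I, mul_one, RCLike.norm_ofNat]
        gcongr
        exact norm_sub_le _ _
    _ ≤ Real.exp |z.im| := by linarith

lemma norm_cos_le_exp_abs_im (z : ℂ) : ‖cos z‖ ≤ Real.exp |z.im| := by
  have h₁ := norm_exp_mul_I_le_exp_abs_im z
  have h₂ := norm_exp_mul_I_le_exp_abs_im (-z)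
  rw [neg_im, abs_neg] at h₂
  calc ‖cos z‖ ≤ (‖exp (z * I)‖ + ‖exp (-z * I)‖) / 2 := by
        rw [cos, norm_div, RCLike.norm_ofNat]
        gcongr
        exact norm_add_le _ _
    _ ≤ Real.exp |z.im| := by linarith

lemma fejerC_eq_dslope_sq : fejerC = fun z ↦ dslope sin 0 z ^ 2 := by
  funext z
  by_cases hz : z = 0
  · simp [fejerC, hz, dslope_same, Complex.deriv_sin]
  · simp [fejerC, hz, dslope_of_ne _ hz, slope_def_field]

lemma differentiable_fejerC : Differentiable ℂ fejerC := by
  have h : DifferentiableOn ℂ (dslope sin 0) Set.univ :=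
    (differentiableOn_dslope Filter.univ_mem).2 differentiable_sin.differentiableOn
  rw [fejerC_eq_dslope_sq]
  exact (differentiableOn_univ.1 h).pow 2

lemma hasDerivAt_fejerC {z : ℂ} (hz : z ≠ 0) :
    HasDerivAt fejerC (2 * (sin z / z) * ((z * cos z - sin z) / z ^ 2)) z := by
  have hEq : (fun w ↦ (sin w / w) ^ 2) =ᶠ[nhds z] fejerC := by
    filter_upwards [isOpen_compl_singleton.mem_nhds hz] with w hw
    simp [fejerC, Set.mem_compl_singleton_iff.1 hw]
  refine (((hasDerivAt_sin z).div (hasDerivAt_id z) hz).pow 2).congr_of_eventuallyEq hEq.symm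
    |>.congr_deriv ?_
  simp only [Pi.div_apply, id, mul_one, Nat.cast_ofNat]
  ring

lemma norm_deriv_fejerC_le_of_one_le_norm {z : ℂ} (hz : 1 ≤ ‖z‖) :
    ‖deriv fejerC z‖ ≤ 8 * Real.exp (2 * |z.im|) / (1 + ‖z‖ ^ 2) := by
  have hz₀ : z ≠ 0 := norm_pos_iff.1 (by linarith)
  set r := ‖z‖
  set e := Real.exp |z.im|
  have hsin : ‖sin z‖ ≤ e := norm_sin_le_exp_abs_im z
  have hnum : ‖z * cos z - sin z‖ ≤ 2 * e * r := by
    calc ‖z * cos z - sin z‖ ≤ r * e + e := by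
          refine (norm_sub_le _ _).trans ?_
          rw [norm_mul]
          gcongr
          exact norm_cos_le_exp_abs_im z
      _ ≤ 2 * e * r := by nlinarith [Real.exp_pos |z.im|]
  have hexp : Real.exp (2 * |z.im|) = e ^ 2 := by rw [sq, ← Real.exp_add, two_mul]
  rw [(hasDerivAt_fejerC hz₀).deriv, norm_mul, norm_mul, norm_div, norm_div, norm_pow,
    RCLike.norm_ofNat, hexp]
  calc 2 * (‖sin z‖ / r) * (‖z * cos z - sin z‖ / r ^ 2)
      ≤ 2 * (e / r) * (2 * e * r / r ^ 2) := by gcongr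
    _ = 4 * e ^ 2 / r ^ 2 := by field_simp; ring
    _ ≤ 8 * e ^ 2 / (1 + r ^ 2) := by
        rw [div_le_div_iff₀ (by positivity) (by positivity)]
        nlinarith [mul_nonneg (sq_nonneg e) (sub_nonneg.2 (one_le_pow₀ (n := 2) hz))]

lemma exists_norm_deriv_fejerC_le :
    ∃ C > 0, ∀ z, ‖deriv fejerC z‖ ≤ C * Real.exp (2 * |z.im|) / (1 + ‖z‖ ^ 2) := by
  obtain ⟨M, hM⟩ := (isCompact_closedBall (0 : ℂ) 1).exists_bound_of_continuousOn
    ((differentiable_fejerC.contDiff (n := 2)).continuous_deriv (by norm_num)).continuousOn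
  have hM₀ : 0 ≤ M := (norm_nonneg _).trans (hM 0 (Metric.mem_closedBall_self zero_le_one))
  refine ⟨max (2 * M) 8, by positivity, fun z ↦ ?_⟩
  rcases le_or_gt ‖z‖ 1 with hz | hz
  · have hexp : 1 ≤ Real.exp (2 * |z.im|) := Real.one_le_exp (by positivity)
    rw [le_div_iff₀ (by positivity)]
    calc ‖deriv fejerC z‖ * (1 + ‖z‖ ^ 2) ≤ M * 2 := by
          gcongr
          · exact hM z (by simpa using hz)
          · nlinarith [norm_nonneg z]
      _ ≤ max (2 * M) 8 * 1 := by linarith [le_max_left (2 * M) 8]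
      _ ≤ max (2 * M) 8 * Real.exp (2 * |z.im|) := by gcongr
  · refine (norm_deriv_fejerC_le_of_one_le_norm hz.le).trans ?_
    gcongr
    exact le_max_right _ _

lemma monotone_exp_two_mul_div_add_sq {a : ℝ} (ha : 1 ≤ a) :
    Monotone fun t ↦ Real.exp (2 * t) / (a + t ^ 2) := by
  intro t y hty
  have hexp : 1 + 2 * (y - t) + 2 * (y - t) ^ 2 ≤ Real.exp (2 * (y - t)) := by
    have := Real.quadratic_le_exp_of_nonneg (x := 2 * (y - t)) (by linarith)
    linarith
  have hsplit : Real.exp (2 * y) = Real.exp (2 * t) * Real.exp (2 * (y - t)) := by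
    rw [← Real.exp_add]; ring_nf
  -- with `s = y - t`: `(a + t²)(1 + 2s + 2s²) ≥ a + (t + s)²` because `a + t² ≥ 1 + t² ≥ t`
  rw [div_le_div_iff₀ (by positivity) (by positivity), hsplit, mul_assoc]
  gcongr
  nlinarith [sq_nonneg (t - 1), sq_nonneg (y - t),
    mul_nonneg (sub_nonneg.2 hty) (sq_nonneg (t - 1))]

lemma norm_sub_le_of_norm_deriv_le_vertical {f : ℂ → ℂ} (hf : Differentiable ℂ f) (z : ℂ)
    {y C : ℝ} (hy : 0 ≤ y) (hC : ∀ t ∈ Set.Ico 0 y, ‖deriv f (z + t * I)‖ ≤ C) :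
    ‖f (z + y * I) - f z‖ ≤ C * y := by
  have hderiv : ∀ t ∈ Set.Icc 0 y, HasDerivWithinAt (fun s : ℝ ↦ f (z + s * I))
      (I • deriv f (z + t * I)) (Set.Icc 0 y) t := by
    intro t _
    have hline : HasDerivAt (fun s : ℝ ↦ z + s * I) I t := by
      simpa using ((hasDerivAt_id t).ofReal_comp.mul_const I).const_add z
    exact ((hf _).hasDerivAt.scomp t hline).hasDerivWithinAt
  have hbound : ∀ t ∈ Set.Ico 0 y, ‖I • deriv f (z + t * I)‖ ≤ C := by
    simpa only [smul_eq_mul, norm_mul, norm_I, one_mul] using hC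
  simpa using norm_image_sub_le_of_norm_deriv_le_segment' hderiv hbound y (Set.right_mem_Icc.2 hy)

/-- Selberg's bound on the vertical variation of the Fejér kernel:
`|(sin(x+iy)/(x+iy))² - (sin x / x)²| ≪ y e^{2y} / (1 + x² + y²)`. -/
theorem fejer_kernel_vertical_variation :
    ∃ A > (0 : ℝ), ∀ x y : ℝ, 0 ≤ y → (x, y) ≠ (0, 0) →
      ‖fejerC ((x : ℂ) + y * Complex.I) - fejerC (x : ℂ)‖
        ≤ A * y * Real.exp (2 * y) / (1 + x ^ 2 + y ^ 2) := by
  obtain ⟨C, hC, hderiv⟩ := exists_norm_deriv_fejerC_le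
  refine ⟨C, hC, fun x y hy _ ↦ ?_⟩
  have hbound : ∀ t ∈ Set.Ico 0 y,
      ‖deriv fejerC (x + t * I)‖ ≤ C * (Real.exp (2 * y) / (1 + x ^ 2 + y ^ 2)) := by
    rintro t ⟨ht, hty⟩
    have hnorm : ‖(x : ℂ) + t * I‖ ^ 2 = x ^ 2 + t ^ 2 := by
      rw [Complex.sq_norm, normSq_add_mul_I]
    calc ‖deriv fejerC (x + t * I)‖
        ≤ C * (Real.exp (2 * t) / (1 + x ^ 2 + t ^ 2)) := by
          simpa [hnorm, abs_of_nonneg ht, add_assoc, mul_div_assoc] using hderiv (x + t * I)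
      _ ≤ C * (Real.exp (2 * y) / (1 + x ^ 2 + y ^ 2)) := by
          gcongr ?_ * ?_
          exact monotone_exp_two_mul_div_add_sq (le_add_of_nonneg_right (sq_nonneg x)) hty.le
  calc _ ≤ C * (Real.exp (2 * y) / (1 + x ^ 2 + y ^ 2)) * y :=
        norm_sub_le_of_norm_deriv_le_vertical differentiable_fejerC x hy hbound
    _ = _ := by ring
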